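/- arXiv:1707.04654 — 3 statements merged into one kernel-verified Lean document; each statement's English description precedes it below -/
import Mathlib

section
/- Let f = ∑_{n≥0} a(n)·Xⁿ be a formal power series with rational coefficients satisfying X·f² − (1 − X)·f + 1 = 0. Then a(0) = 1, a(1) = 2, and for every integer n ≥ 2, (n+1)·a(n) = 3·(2n−1)·a(n−1) − (n−2)·a(n−2). (f is the generating function (1 − x − √(1−6x+x²))/(2x) of the large Schröder numbers, OEIS A006318.) -/
/-!
Differentiating `X f² − (1 − X) f + 1 = 0` and using the equation to eliminate `f²` gives
`f − 1 + (2Xf − (1 − X)) · θf = 0`, where `θ = X · d/dX`. The quadratic equation also says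
`(2Xf − (1 − X))² = 1 − 6X + X²` (the discriminant), so multiplying by `2Xf − (1 − X)` yields the
linear equation `(1 − 6X + X²) · θf = (3X − 1) f + 1 + X`. Since `θ` multiplies the `n`-th
coefficient by `n`, comparing coefficients of `X^(n+2)` is the recurrence.
-/

open PowerSeries

theorem PowerSeries.coeff_ofNat_mul {R : Type*} [Semiring R] (k n : ℕ) [k.AtLeastTwo]
    (g : R⟦X⟧) : coeff n ((no_index (OfNat.ofNat k) : R⟦X⟧) * g) = OfNat.ofNat k * coeff n g := by
  rw [← map_ofNat C, coeff_C_mul]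

theorem PowerSeries.coeff_X_mul_derivative {R : Type*} [CommSemiring R] (f : R⟦X⟧) (n : ℕ) :
    coeff n (X * d⁄dX R f) = n * coeff n f := by
  cases n with
  | zero => simp
  | succ n => rw [coeff_succ_X_mul, coeff_derivative]; push_cast; ring

section LargeSchroeder

variable {R : Type*} [CommRing R]

abbrev IsLargeSchroederGF (f : R⟦X⟧) : Prop :=
  X * f ^ 2 - (1 - X) * f + 1 = 0

namespace IsLargeSchroederGF

variable {f : R⟦X⟧}

theorem coeff_zero (hf : IsLargeSchroederGF f) : coeff 0 f = 1 := by
  have h := congrArg constantCoeff hf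
  simp only [map_add, map_sub, map_mul, constantCoeff_X, map_one, map_zero] at h
  rw [coeff_zero_eq_constantCoeff_apply]
  linear_combination -h

theorem coeff_one (hf : IsLargeSchroederGF f) : coeff 1 f = 2 := by
  have h := congrArg (coeff (0 + 1)) hf
  simp only [map_add, map_sub, map_zero, sub_mul, one_mul, coeff_succ_X_mul,
    PowerSeries.coeff_one, Nat.add_one_ne_zero, if_false, add_zero] at h
  rw [zero_add, coeff_zero_eq_constantCoeff_apply, map_pow, ← coeff_zero_eq_constantCoeff_apply,
    hf.coeff_zero] at h
  linear_combination -h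

theorem sq_eq_discriminant (hf : IsLargeSchroederGF f) :
    (2 * X * f - (1 - X)) ^ 2 = 1 - 6 * X + X ^ 2 := by
  linear_combination 4 * X * hf

theorem derivative_eq (hf : IsLargeSchroederGF f) :
    f - 1 + (2 * X * f - (1 - X)) * (X * d⁄dX R f) = 0 := by
  have hD := congrArg (d⁄dX R) hf
  simp only [map_add, map_sub, Derivation.leibniz, derivative_pow, derivative_X,
    derivative_one, smul_eq_mul, map_zero, Nat.cast_ofNat] at hD
  linear_combination X * hD - hf

theorem linear_ode (hf : IsLargeSchroederGF f) :
    (1 - 6 * X + X ^ 2) * (X * d⁄dX R f) = (3 * X - 1) * f + 1 + X := by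
  linear_combination (2 * X * f - (1 - X)) * hf.derivative_eq -
    (X * d⁄dX R f) * hf.sq_eq_discriminant - 2 * hf

theorem coeff_add_two (hf : IsLargeSchroederGF f) (n : ℕ) :
    ((n : R) + 3) * coeff (n + 2) f =
      3 * (2 * n + 3) * coeff (n + 1) f - n * coeff n f := by
  have hθ := coeff_X_mul_derivative f
  have hode := hf.linear_ode
  -- Opaque `θf`, so that `coeff_succ_X_mul` cannot consume the `X` of `X * d⁄dX R f`.
  generalize X * d⁄dX R f = θf at hode hθ
  have h := congrArg (coeff (n + 2)) hode
  simp only [sub_mul, add_mul, one_mul, mul_assoc, sq, map_add, map_sub, coeff_ofNat_mul,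
    coeff_succ_X_mul, hθ, PowerSeries.coeff_one, coeff_X, show n + 2 ≠ 0 by omega,
    show n + 2 ≠ 1 by omega, if_false, add_zero] at h
  push_cast at h
  linear_combination h

end IsLargeSchroederGF

end LargeSchroeder

/-- The coefficient sequence of the power series solution of
X·f² − (1 − X)·f + 1 = 0 (the large Schröder numbers, OEIS A006318) satisfies
a(0) = 1, a(1) = 2, and (n+1)·a(n) = 3·(2n−1)·a(n−1) − (n−2)·a(n−2) for n ≥ 2. -/
theorem large_schroeder_recurrence (f : PowerSeries ℚ)
    (hf : PowerSeries.X * f ^ 2 - (1 - PowerSeries.X) * f + 1 = 0) :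
    PowerSeries.coeff 0 f = 1 ∧ PowerSeries.coeff 1 f = 2 ∧
      ∀ n : ℕ, 2 ≤ n →
        ((n : ℚ) + 1) * PowerSeries.coeff n f =
          3 * (2 * (n : ℚ) - 1) * PowerSeries.coeff (n - 1) f -
            ((n : ℚ) - 2) * PowerSeries.coeff (n - 2) f := by
  have hS : IsLargeSchroederGF f := hf
  refine ⟨hS.coeff_zero, hS.coeff_one, fun n hn => ?_⟩
  obtain ⟨m, rfl⟩ : ∃ m, n = m + 2 := ⟨n - 2, by omega⟩
  simp only [Nat.add_sub_cancel, show m + 2 - 1 = m + 1 by omega]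
  push_cast
  linear_combination hS.coeff_add_two m
end

section
/- Let f = ∑_{n≥0} a(n)·Xⁿ be a formal power series with rational coefficients satisfying (1 − 2X − 3X²)·f² = 1 and a(0) = 1. Then a(1) = 1 and for every integer n ≥ 2, n·a(n) = (2n−1)·a(n−1) + 3·(n−1)·a(n−2). (f is the generating function 1/√(1−2x−3x²) of the central trinomial coefficients, OEIS A002426.) -/
/-!
Differentiating `P * f ^ 2 = 1` with `P = 1 - 2X - 3X²` and cancelling the unit `2 * f` gives
the linear differential equation `P * f' = (1 + 3X) * f`. Comparing coefficients of `X * f'`,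
whose `n`-th coefficient is `n * a(n)`, turns it into the recurrence, and its constant term
reads `a(1) = a(0)`.
-/

open PowerSeries

namespace PowerSeries

@[simp]
theorem derivative_ofNat {R : Type*} [CommSemiring R] (n : ℕ) [n.AtLeastTwo] :
    d⁄dX R (ofNat(n) : R⟦X⟧) = 0 :=
  (d⁄dX R).map_natCast n

theorem coeff_X_mul_derivative_s8 {R : Type*} [CommSemiring R] (f : R⟦X⟧) (n : ℕ) :
    coeff n (X * d⁄dX R f) = n * coeff n f := by
  cases n with
  | zero => simp
  | succ n => rw [coeff_succ_X_mul, coeff_derivative, mul_comm]; push_cast; rfl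

theorem derivative_mul_add_two_mul_derivative_eq_zero {R : Type*} [CommRing R]
    {P f : R⟦X⟧} (h : P * f ^ 2 = 1) : d⁄dX R P * f + 2 * P * d⁄dX R f = 0 := by
  have hf : IsUnit f := .of_mul_eq_one (P * f) (by linear_combination h)
  have hd := congrArg (d⁄dX R) h
  simp only [Derivation.leibniz, Derivation.leibniz_pow, derivative_one, smul_eq_mul,
    nsmul_eq_mul] at hd
  refine hf.mul_left_eq_zero.mp ?_
  push_cast at hd
  linear_combination hd

end PowerSeries

namespace CentralTrinomial

theorem derivative_eq {R : Type*} [CommRing R] [IsDomain R] [CharZero R] {f : R⟦X⟧}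
    (hf : (1 - 2 * X - 3 * X ^ 2) * f ^ 2 = 1) :
    (1 - 2 * X - 3 * X ^ 2) * d⁄dX R f = (1 + 3 * X) * f := by
  have h := derivative_mul_add_two_mul_derivative_eq_zero hf
  have h2 : (2 : R⟦X⟧) ≠ 0 := fun h => by simpa [map_ofNat] using congrArg (coeff 0) h
  have hP : d⁄dX R (1 - 2 * X - 3 * X ^ 2 : R⟦X⟧) = -2 * (1 + 3 * X) := by
    simp only [map_sub, derivative_one, Derivation.leibniz, Derivation.leibniz_pow,
      derivative_X, derivative_ofNat, smul_eq_mul, nsmul_eq_mul]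
    push_cast
    ring
  rw [hP] at h
  refine sub_eq_zero.mp ((mul_eq_zero.mp ?_).resolve_left h2)
  linear_combination h

variable {R : Type*} [CommRing R] {f : R⟦X⟧}

theorem coeff_one_eq_coeff_zero (h : (1 - 2 * X - 3 * X ^ 2) * d⁄dX R f = (1 + 3 * X) * f) :
    coeff 1 f = coeff 0 f := by
  have hc := congrArg (coeff 0) h
  simp only [sub_mul, add_mul, mul_assoc, one_mul, map_sub, map_add, coeff_derivative] at hc
  simpa using hc

theorem coeff_add_two (h : (1 - 2 * X - 3 * X ^ 2) * d⁄dX R f = (1 + 3 * X) * f) (n : ℕ) :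
    (n + 2) * coeff (n + 2) f = (2 * n + 3) * coeff (n + 1) f + 3 * (n + 1) * coeff n f := by
  have hX : X * d⁄dX R f = C 2 * (X * (X * d⁄dX R f)) + C 3 * (X ^ 2 * (X * d⁄dX R f))
      + X * f + C 3 * (X ^ 2 * f) := by
    simp only [map_ofNat]
    linear_combination X * h
  have hg := coeff_X_mul_derivative_s8 f
  generalize X * d⁄dX R f = g at hX hg
  have hc := congrArg (coeff (n + 2)) hX
  simp only [map_add, coeff_C_mul, coeff_succ_X_mul, coeff_X_pow_mul, hg] at hc
  push_cast at hc
  linear_combination hc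

end CentralTrinomial

/-- The coefficient sequence of the power series f with (1 − 2X − 3X²)·f² = 1
and a(0) = 1 (the central trinomial coefficients, OEIS A002426) satisfies
a(1) = 1 and n·a(n) = (2n−1)·a(n−1) + 3·(n−1)·a(n−2) for all n ≥ 2. -/
theorem central_trinomial_recurrence (f : PowerSeries ℚ)
    (hf : (1 - 2 * PowerSeries.X - 3 * PowerSeries.X ^ 2) * f ^ 2 = 1)
    (h0 : PowerSeries.coeff 0 f = 1) :
    PowerSeries.coeff 1 f = 1 ∧
      ∀ n : ℕ, 2 ≤ n →
        (n : ℚ) * PowerSeries.coeff n f =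
          (2 * (n : ℚ) - 1) * PowerSeries.coeff (n - 1) f +
            3 * ((n : ℚ) - 1) * PowerSeries.coeff (n - 2) f := by
  have hode := CentralTrinomial.derivative_eq hf
  refine ⟨(CentralTrinomial.coeff_one_eq_coeff_zero hode).trans h0, fun n hn => ?_⟩
  obtain ⟨m, rfl⟩ := Nat.exists_eq_add_of_le' hn
  have hrec := CentralTrinomial.coeff_add_two hode m
  simp only [Nat.add_sub_cancel, Nat.cast_add, Nat.cast_ofNat]
  rw [show m + 2 - 1 = m + 1 by omega]
  linear_combination hrec
end

section
/- If f = ∑_{n≥0} a(n)·Xⁿ ∈ ℚ⟦X⟧ is an algebraic formal power series, i.e. ∑_{i=0}^{A} pᵢ(X)·fⁱ = 0 for some polynomials p₀, …, p_A ∈ ℚ[X] not all zero, then its coefficient sequence is P-recursive: there exist an integer M ≥ 0, polynomials c₀(n), …, c_M(n) ∈ ℚ[n], not all zero, and an integer n₀ ≥ M, such that ∑_{i=0}^{M} cᵢ(n)·a(n−i) = 0 for every integer n ≥ n₀. -/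
/-!
Let `P(X, Y)` annihilate `f` with `g = ∂P/∂Y (X, f) ≠ 0` (replace `P` by `∂P/∂Y` until this
holds; in characteristic zero it stays nonzero). Differentiating `P(X, f) = 0` shows that `g f'` is
a polynomial in `X` and `f`, and inductively so is every `f⁽ᵏ⁾` times a power of `g`. Inside
Laurent series all `f⁽ᵏ⁾` therefore lie in the finite-dimensional `ℚ(X)`-vector space `ℚ(X)(f)`,
so they are linearly dependent over `ℚ(X)`, hence over `ℚ[X]`. Extracting coefficients from such a
relation `∑ₖ qₖ(X) f⁽ᵏ⁾ = 0` gives the recurrence.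
-/

open Polynomial Finset
open scoped PowerSeries RatFunc LaurentSeries

theorem IsAlgebraic.exists_aeval_eq_zero_aeval_derivative_ne_zero {A B : Type*} [CommRing A]
    [IsAddTorsionFree A] [CommRing B] [Algebra A B] (hinj : Function.Injective (algebraMap A B))
    {x : B} (hx : IsAlgebraic A x) : ∃ P : A[X], aeval x P = 0 ∧ aeval x (derivative P) ≠ 0 := by
  obtain ⟨P, hP0, hPx⟩ := hx
  induction hn : P.natDegree using Nat.strong_induction_on generalizing P with
  | _ n ih =>
    by_cases hP' : aeval x (derivative P) = 0
    · have hdeg : P.natDegree ≠ 0 := by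
        intro h0
        obtain ⟨a, rfl⟩ := natDegree_eq_zero.mp h0
        rw [aeval_C, map_eq_zero_iff _ hinj] at hPx
        exact hP0 (by rw [hPx, map_zero])
      exact ih _ (hn ▸ natDegree_derivative_lt hdeg) _ (derivative_ne_zero.mpr hdeg) hP' rfl
    · exact ⟨P, hPx, hP'⟩

namespace Derivation

section Subring

variable {k B S : Type*} [CommRing k] [CommRing B] [Algebra k B] [SetLike S B] [SubringClass S B]
  (D : Derivation k B B) {R : S} {g : B}

/-- If `g` clears the denominators of `D` on `R`, then `g ^ 2` clears them on `R[1/g]`. -/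
theorem pow_add_two_mul_mem_of_pow_mul_mem (hg : g ∈ R) (hR : ∀ r ∈ R, g * D r ∈ R) {h : B}
    {m : ℕ} (hm : g ^ m * h ∈ R) : g ^ (m + 2) * D h ∈ R := by
  have key : g ^ (m + 2) * D h = g * (g * D (g ^ m * h)) - m • ((g * D g) * (g ^ m * h)) := by
    rcases m with _ | m
    · simp [pow_two, mul_assoc]
    · simp only [leibniz, leibniz_pow, smul_eq_mul, nsmul_eq_mul, Nat.add_sub_cancel]
      ring
  rw [key]
  exact sub_mem (mul_mem hg (hR _ hm)) (nsmul_mem (mul_mem (hR g hg) hm) m)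

theorem exists_pow_mul_iterate_mem (hg : g ∈ R) (hR : ∀ r ∈ R, g * D r ∈ R) {x : B}
    (hx : x ∈ R) (n : ℕ) : ∃ m, g ^ m * D^[n] x ∈ R := by
  induction n with
  | zero => exact ⟨0, by simpa using hx⟩
  | succ n ih =>
    obtain ⟨m, hm⟩ := ih
    refine ⟨m + 2, ?_⟩
    rw [Function.iterate_succ_apply']
    exact D.pow_add_two_mul_mem_of_pow_mul_mem hg hR hm

end Subring

section Adjoin

variable {k A B : Type*} [CommRing k] [CommRing A] [CommRing B] [Algebra k B] [Algebra A B]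
  (D : Derivation k B B)

theorem apply_aeval_sub_aeval_derivative_mul_mem_adjoin
    (hD : ∀ a : A, D (algebraMap A B a) ∈ Set.range (algebraMap A B)) (x : B) (Q : A[X]) :
    D (aeval x Q) - aeval x (derivative Q) * D x ∈ Algebra.adjoin A {x} := by
  induction Q using Polynomial.induction_on' with
  | add Q₁ Q₂ h₁ h₂ =>
    convert add_mem h₁ h₂ using 1
    simp only [map_add]
    ring
  | monomial n a =>
    obtain ⟨a', ha'⟩ := hD a
    have : D (aeval x (monomial n a)) - aeval x (derivative (monomial n a)) * D x
        = algebraMap A B a' * x ^ n := by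
      rw [aeval_monomial, derivative_monomial, aeval_monomial, leibniz, leibniz_pow, ← ha']
      rcases n with _ | n
      · simp
      · simp only [smul_eq_mul, nsmul_eq_mul, map_mul, Nat.add_sub_cancel]
        push_cast
        ring
    rw [this]
    exact mul_mem (Subalgebra.algebraMap_mem _ a')
      (pow_mem (Algebra.self_mem_adjoin_singleton A x) n)

theorem aeval_derivative_mul_apply_mem_adjoin
    (hD : ∀ a : A, D (algebraMap A B a) ∈ Set.range (algebraMap A B)) {x : B} {P : A[X]}
    (hP : aeval x P = 0) {r : B} (hr : r ∈ Algebra.adjoin A {x}) :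
    aeval x (derivative P) * D r ∈ Algebra.adjoin A {x} := by
  have hx : aeval x (derivative P) * D x ∈ Algebra.adjoin A {x} := by
    simpa [hP] using neg_mem (D.apply_aeval_sub_aeval_derivative_mul_mem_adjoin hD x P)
  rw [Algebra.adjoin_singleton_eq_range_aeval, AlgHom.mem_range] at hr
  obtain ⟨Q, rfl⟩ := hr
  have hQ := D.apply_aeval_sub_aeval_derivative_mul_mem_adjoin hD x Q
  have : aeval x (derivative P) * D (aeval x Q) =
      aeval x (derivative P) * (D (aeval x Q) - aeval x (derivative Q) * D x) +
        aeval x (derivative Q) * (aeval x (derivative P) * D x) := by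
    ring
  rw [this]
  exact add_mem (mul_mem (aeval_mem_adjoin_singleton A x) hQ)
    (mul_mem (aeval_mem_adjoin_singleton A x) hx)

theorem exists_pow_aeval_derivative_mul_iterate_mem_adjoin
    (hD : ∀ a : A, D (algebraMap A B a) ∈ Set.range (algebraMap A B)) {x : B} {P : A[X]}
    (hP : aeval x P = 0) (n : ℕ) :
    ∃ m, aeval x (derivative P) ^ m * D^[n] x ∈ Algebra.adjoin A {x} :=
  D.exists_pow_mul_iterate_mem (aeval_mem_adjoin_singleton A x)
    (fun _ => D.aeval_derivative_mul_apply_mem_adjoin hD hP)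
    (Algebra.self_mem_adjoin_singleton A x) n

end Adjoin

end Derivation

namespace PowerSeries

theorem algebraMap_polynomial_eq_coe {R : Type*} [CommSemiring R] (p : R[X]) :
    algebraMap R[X] R⟦X⟧ p = p := by
  rw [algebraMap_apply', Algebra.algebraMap_self, map_id]
  rfl

theorem algebraMap_polynomial_injective {R : Type*} [CommSemiring R] :
    Function.Injective (algebraMap R[X] R⟦X⟧) := by
  intro p q h
  simpa only [algebraMap_polynomial_eq_coe, Polynomial.coe_inj] using h

theorem derivative_algebraMap_polynomial {R : Type*} [CommRing R] (p : R[X]) :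
    d⁄dX R (algebraMap R[X] R⟦X⟧ p) = algebraMap R[X] R⟦X⟧ (Polynomial.derivative p) := by
  simp only [algebraMap_polynomial_eq_coe, derivative_coe]

instance {F : Type*} [Field F] : IsScalarTower F[X] F⟦X⟧ F⸨X⸩ :=
  IsScalarTower.of_algebraMap_eq fun _ => rfl

def IsDFinite {R : Type*} [CommRing R] (f : R⟦X⟧) : Prop :=
  ¬ LinearIndependent R[X] fun k : ℕ => (d⁄dX R)^[k] f

end PowerSeries

theorem IsAlgebraic.isDFinite {F : Type*} [Field F] [CharZero F] {f : F⟦X⟧}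
    (hf : IsAlgebraic F[X] f) : f.IsDFinite := by
  obtain ⟨P, hP, hP'⟩ := hf.exists_aeval_eq_zero_aeval_derivative_ne_zero
    PowerSeries.algebraMap_polynomial_injective
  let ι := IsScalarTower.toAlgHom F[X] F⟦X⟧ F⸨X⸩
  have hι : Function.Injective ι := HahnSeries.ofPowerSeries_injective
  let V := IntermediateField.adjoin (RatFunc F) {ι f}
  have : FiniteDimensional (RatFunc F) V := IntermediateField.adjoin.finiteDimensional
    ((hf.algHom ι).extendScalars (IsFractionRing.injective F[X] (RatFunc F))).isIntegral
  have hadjoin {r : F⟦X⟧} (hr : r ∈ Algebra.adjoin F[X] {f}) : ι r ∈ V :=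
    Algebra.adjoin_le (S := (V.toSubalgebra.restrictScalars F[X]).comap ι)
      (Set.singleton_subset_iff.mpr (IntermediateField.mem_adjoin_simple_self _ _)) hr
  have hderiv (n : ℕ) : ι ((d⁄dX F)^[n] f) ∈ V := by
    obtain ⟨m, hm⟩ := (d⁄dX F).exists_pow_aeval_derivative_mul_iterate_mem_adjoin
      (fun a => ⟨_, (PowerSeries.derivative_algebraMap_polynomial a).symm⟩) hP n
    have hg : ι (aeval f (derivative P)) ≠ 0 := (map_ne_zero_iff _ hι).mpr hP'
    have := div_mem (hadjoin hm)
      (pow_mem (hadjoin (aeval_mem_adjoin_singleton (p := derivative P) _ f)) m)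
    rwa [map_mul, map_pow, mul_div_cancel_left₀ _ (pow_ne_zero _ hg)] at this
  intro hli
  have hliL := hli.map' ι.toLinearMap (LinearMap.ker_eq_bot.mpr hι)
  rw [LinearIndependent.iff_fractionRing F[X] (RatFunc F)] at hliL
  exact Module.Finite.not_linearIndependent_of_infinite (R := RatFunc F) (M := V)
    (fun n => ⟨_, hderiv n⟩) (hliL.of_comp (IntermediateField.val V).toLinearMap)

namespace PowerSeries

variable {R : Type*} [CommRing R]

theorem coeff_X_pow_mul_iterate_derivative (f : R⟦X⟧) (m j k : ℕ) :
    coeff (m + j) (X ^ j * (d⁄dX R)^[k] f) = (m + k).descFactorial k * coeff (m + k) f := by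
  rw [coeff_X_pow_mul, coeff_iterate_derivative, Nat.add_descFactorial_eq_ascFactorial]

theorem coeff_polynomial_smul (q : R[X]) (h : R⟦X⟧) {J : ℕ} (hJ : q.natDegree ≤ J) (m : ℕ) :
    coeff m (q • h) = ∑ j ∈ range (J + 1), q.coeff j * coeff m (X ^ j * h) := by
  conv_lhs =>
    rw [Algebra.smul_def, algebraMap_polynomial_eq_coe, q.as_sum_range' (J + 1) (by omega)]
  simp only [← Polynomial.coeToPowerSeries.ringHom_apply, map_sum, sum_mul]
  simp [← C_mul_X_pow_eq_monomial, mul_assoc, coeff_C_mul]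

end PowerSeries

section DescPochhammer

variable {R : Type*} [CommRing R] [IsDomain R]

theorem natDegree_descPochhammer_comp_X_sub_C (k : ℕ) (a : R) :
    ((descPochhammer R k).comp (X - C a)).natDegree = k := by
  rw [natDegree_comp, descPochhammer_natDegree, natDegree_X_sub_C, mul_one]

theorem coeff_descPochhammer_comp_X_sub_C_self (k : ℕ) (a : R) :
    ((descPochhammer R k).comp (X - C a)).coeff k = 1 := by
  have hmonic := (monic_descPochhammer R k).comp (monic_X_sub_C a) (by simp)
  rwa [Monic, leadingCoeff, natDegree_descPochhammer_comp_X_sub_C] at hmonic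

end DescPochhammer

section Recurrence

variable {R : Type*} [CommRing R]

def IsPRecursive (a : ℕ → R) : Prop :=
  ∃ (M : ℕ) (c : ℕ → R[X]) (n₀ : ℕ), M ≤ n₀ ∧ (∃ i ≤ M, c i ≠ 0) ∧
    ∀ n : ℕ, n₀ ≤ n → ∑ i ∈ range (M + 1), (c i).eval (n : R) * a (n - i) = 0

/-- The coefficients of the recurrence induced by `∑_{k ∈ s} qₖ • f⁽ᵏ⁾ = 0`, where `k ≤ d` and
`deg qₖ ≤ J` on `s`: the monomial `X ^ j ∂ ^ k` contributes
`q_{k,j} (n - i) (n - i - 1) ⋯ (n - i - k + 1)` to the shift `i = d + j - k`. -/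
noncomputable def recurrenceCoeff (s : Finset ℕ) (q : ℕ → R[X]) (d J i : ℕ) : R[X] :=
  ∑ k ∈ s, ∑ j ∈ range (J + 1),
    if i = d + j - k then C ((q k).coeff j) * (descPochhammer R k).comp (X - C (i : R)) else 0

variable {s : Finset ℕ} {q : ℕ → R[X]} {d J : ℕ}

theorem eval_recurrenceCoeff {i n : ℕ} (hi : i ≤ n) :
    (recurrenceCoeff s q d J i).eval (n : R) = ∑ k ∈ s, ∑ j ∈ range (J + 1),
      if i = d + j - k then (q k).coeff j * ((n - i).descFactorial k : R) else 0 := by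
  simp only [recurrenceCoeff, eval_finsetSum, apply_ite (eval (n : R)), eval_mul, eval_C,
    eval_comp, eval_sub, eval_X, eval_zero, ← Nat.cast_sub hi, descPochhammer_eval_eq_descFactorial]

theorem sum_recurrenceCoeff_eval_mul_coeff {f : R⟦X⟧}
    (hf : ∑ k ∈ s, q k • (d⁄dX R)^[k] f = 0) (hd : ∀ k ∈ s, k ≤ d)
    (hJ : ∀ k ∈ s, (q k).natDegree ≤ J) {n : ℕ} (hn : d + J ≤ n) :
    ∑ i ∈ range (d + J + 1), (recurrenceCoeff s q d J i).eval (n : R) *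
      PowerSeries.coeff (n - i) f = 0 := by
  calc _ = ∑ k ∈ s, ∑ j ∈ range (J + 1), ∑ i ∈ range (d + J + 1),
        if i = d + j - k then
          (q k).coeff j * ((n - i).descFactorial k * PowerSeries.coeff (n - i) f)
        else 0 := by
        refine (sum_congr rfl fun i hi => ?_).trans
          (sum_comm.trans (sum_congr rfl fun k _ => sum_comm))
        rw [eval_recurrenceCoeff (by simp only [mem_range] at hi; omega)]
        simp only [sum_mul, ite_mul, zero_mul, mul_assoc]
    _ = ∑ k ∈ s, ∑ j ∈ range (J + 1), (q k).coeff j *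
        ((n - (d + j - k)).descFactorial k * PowerSeries.coeff (n - (d + j - k)) f) := by
        refine sum_congr rfl fun k hk => sum_congr rfl fun j hj => ?_
        have := hd k hk
        rw [sum_ite_eq', if_pos]
        simp only [mem_range] at hj ⊢
        omega
    _ = ∑ k ∈ s, ∑ j ∈ range (J + 1), (q k).coeff j *
        PowerSeries.coeff (n - d) (PowerSeries.X ^ j * (d⁄dX R)^[k] f) := by
        refine sum_congr rfl fun k hk => sum_congr rfl fun j hj => ?_
        have := hd k hk
        simp only [mem_range] at hj
        rw [show n - d = (n - d - j) + j by omega, show n - (d + j - k) = (n - d - j) + k by omega,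
          PowerSeries.coeff_X_pow_mul_iterate_derivative]
    _ = PowerSeries.coeff (n - d) (∑ k ∈ s, q k • (d⁄dX R)^[k] f) := by
        rw [map_sum]
        exact sum_congr rfl fun k hk => (PowerSeries.coeff_polynomial_smul _ _ (hJ k hk) _).symm
    _ = 0 := by rw [hf, map_zero]

variable [IsDomain R]

/-- The coefficient of `X ^ k₁` in the shift `d + deg q_{k₁} - k₁`, for the largest `k₁` with
`q_{k₁} ≠ 0`, is the leading coefficient of `q_{k₁}`. -/
theorem exists_recurrenceCoeff_ne_zero (hd : ∀ k ∈ s, k ≤ d)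
    (hJ : ∀ k ∈ s, (q k).natDegree ≤ J) (hq : ∃ k ∈ s, q k ≠ 0) :
    ∃ i ≤ d + J, recurrenceCoeff s q d J i ≠ 0 := by
  classical
  have ht : (s.filter (q · ≠ 0)).Nonempty := by simpa [Finset.Nonempty] using hq
  obtain ⟨k₁, hk₁, hmax⟩ := (s.filter (q · ≠ 0)).exists_max_image id ht
  obtain ⟨hk₁s, hq₁⟩ := mem_filter.mp hk₁
  have hk₁d := hd k₁ hk₁s
  have hj₁J := hJ k₁ hk₁s
  set j₁ := (q k₁).natDegree
  set i₀ := d + j₁ - k₁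
  have hother : ∀ k ∈ s, k ≠ k₁ → ∑ j ∈ range (J + 1), (if i₀ = d + j - k then
      (q k).coeff j * ((descPochhammer R k).comp (X - C (i₀ : R))).coeff k₁ else 0) = 0 := by
    intro k hk hne
    refine sum_eq_zero fun j _ => ite_eq_right_iff.mpr fun _ => ?_
    rcases hne.lt_or_gt with hlt | hlt
    · exact mul_eq_zero_of_right _
        (coeff_eq_zero_of_natDegree_lt (by rwa [natDegree_descPochhammer_comp_X_sub_C]))
    · by_contra h
      exact (hmax k (mem_filter.mpr ⟨hk, fun h0 => h (by simp [h0])⟩)).not_gt hlt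
  refine ⟨i₀, by omega, fun h => leadingCoeff_ne_zero.mpr hq₁ ?_⟩
  calc (q k₁).leadingCoeff = (recurrenceCoeff s q d J i₀).coeff k₁ := by
        simp only [recurrenceCoeff, finsetSum_coeff, apply_ite (coeff · k₁), coeff_C_mul,
          coeff_zero]
        rw [sum_eq_single_of_mem k₁ hk₁s hother,
          sum_eq_single_of_mem j₁ (mem_range.mpr (by omega)), if_pos rfl,
          coeff_descPochhammer_comp_X_sub_C_self, mul_one]
        · rfl
        · intro j _ hj
          rw [if_neg (by omega)]
    _ = 0 := by rw [h, coeff_zero]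

theorem PowerSeries.IsDFinite.isPRecursive_coeff {f : R⟦X⟧} (hf : f.IsDFinite) :
    IsPRecursive fun n => PowerSeries.coeff n f := by
  obtain ⟨s, q, hsum, hq⟩ := not_linearIndependent_iff.mp hf
  have hd : ∀ k ∈ s, k ≤ s.sup id := fun k hk => le_sup (f := id) hk
  have hJ : ∀ k ∈ s, (q k).natDegree ≤ s.sup fun k => (q k).natDegree :=
    fun k hk => le_sup (f := fun k => (q k).natDegree) hk
  exact ⟨_, _, _, le_rfl, exists_recurrenceCoeff_ne_zero hd hJ hq,
    fun n hn => sum_recurrenceCoeff_eval_mul_coeff hsum hd hJ hn⟩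

end Recurrence

/-- The coefficient sequence of any algebraic formal power series over ℚ is
P-recursive: if ∑_{i=0}^{A} pᵢ(X)·fⁱ = 0 with p₀, …, p_A not all zero, then
there exist M ≥ 0, polynomials c₀, …, c_M not all zero, and n₀ ≥ M such that
∑_{i=0}^{M} cᵢ(n)·a(n−i) = 0 for every n ≥ n₀. -/
theorem algebraic_coeffs_pRecursive (f : PowerSeries ℚ) (A : ℕ)
    (p : ℕ → Polynomial ℚ) (hp : ∃ i ≤ A, p i ≠ 0)
    (heq : ∑ i ∈ Finset.range (A + 1), (p i : PowerSeries ℚ) * f ^ i = 0) :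
    ∃ (M : ℕ) (c : ℕ → Polynomial ℚ) (n₀ : ℕ), M ≤ n₀ ∧ (∃ i ≤ M, c i ≠ 0) ∧
      ∀ n : ℕ, n₀ ≤ n →
        ∑ i ∈ Finset.range (M + 1),
          (c i).eval (n : ℚ) * PowerSeries.coeff (n - i) f = 0 := by
  have hf : IsAlgebraic ℚ[X] f := by
    obtain ⟨i, hiA, hi⟩ := hp
    refine ⟨∑ j ∈ range (A + 1), C (p j) * X ^ j, fun h => hi ?_, ?_⟩
    · simpa [finsetSum_coeff, coeff_C_mul_X_pow, Nat.lt_succ_of_le hiA] using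
        congr_arg (coeff · i) h
    · simpa [PowerSeries.algebraMap_polynomial_eq_coe] using heq
  exact hf.isDFinite.isPRecursive_coeff
end
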